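/- arXiv:2605.24405 — 4 statements merged into one kernel-verified Lean document; each statement's English description precedes it below -/
import Mathlib

section
/- Let S be a finite nonempty type, let γ be a real number with 0 < γ < 1, let r_max > 0 and set c = r_max/(1−γ). Let T and T̂ be row-stochastic matrices on S (the true and learned dynamics of a Markov chain on state–action pairs under a fixed policy), let r : S → ℝ satisfy |r x| ≤ r_max for all x, and let μ₀ be a probability vector on S. Let V be the value function of (T, r, γ) and assume |V x| ≤ c for all x. Let u, û : S → ℝ and ε_density ≥ 0 satisfy |u x − û x| ≤ ε_density for all x. Assume there exist C > 0 and ε_approx ≥ 0 such that for every x in S and every f : S → ℝ with |f y| ≤ 1 for all y, one has |∑_y (T̂ x y − T x y) · f y| ≤ C · (∑_y T̂ x y · u y) + ε_approx. Set λ = γ·c·C and define the regularized reward r̃ x = r x − λ · ∑_y T̂ x y · û y. Define the normalized returns η_M = (1−γ) · ∑'_{t≥0} γ^t · ∑_x (μ₀ᵀ T^t) x · r x and η_{M̃} = (1−γ) · ∑'_{t≥0} γ^t · ∑_x (μ₀ᵀ T̂^t) x · r̃ x, where μ₀ᵀ P^t denotes the row vector μ₀ multiplied by the t-th matrix power of P.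 Then η_M ≥ η_{M̃} − γ·c·ε_approx − λ·ε_density. -/
/-!
By the Bellman equation the true reward is the Bellman residual `r = V - γ T V`, so along the
discounted occupancy of `T` the return telescopes to `(1 - γ) μ₀ ⬝ V` exactly. Applying the
model-error bound to `f = V / c` and then the density error shows that the penalized reward is
at most the Bellman residual `V - γ T̂ V` of the learned model plus the slack
`γ c ε_approx + λ ε_density`; telescoping along `T̂` turns this into the bound on `η_M̃`.
-/

open Matrix

section DiscountedOccupancy

variable {S : Type*} [Fintype S] {γ : ℝ} {μ : S → ℝ} {P : Matrix S S ℝ}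

theorem abs_dotProduct_le_norm_of_mem_stdSimplex {ν : S → ℝ} (hν : ν ∈ stdSimplex ℝ S)
    (g : S → ℝ) : |ν ⬝ᵥ g| ≤ ‖g‖ :=
  calc |ν ⬝ᵥ g| ≤ ∑ x, |ν x * g x| := Finset.abs_sum_le_sum_abs _ _
    _ = ∑ x, ν x * |g x| := by simp only [abs_mul, abs_of_nonneg (hν.1 _)]
    _ ≤ ∑ x, ν x * ‖g‖ :=
        Finset.sum_le_sum fun x _ => mul_le_mul_of_nonneg_left (norm_le_pi_norm g x) (hν.1 x)
    _ = ‖g‖ := by rw [← Finset.sum_mul, hν.2, one_mul]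

theorem dotProduct_const_of_mem_stdSimplex {ν : S → ℝ} (hν : ν ∈ stdSimplex ℝ S) (δ : ℝ) :
    ν ⬝ᵥ (fun _ => δ) = δ := by
  simp [dotProduct, ← Finset.sum_mul, hν.2]

theorem abs_sum_mul_le_mul_of_forall_abs_le_one {a f : S → ℝ} {B c : ℝ}
    (hB : ∀ f : S → ℝ, (∀ y, |f y| ≤ 1) → |∑ y, a y * f y| ≤ B) (hc : 0 < c)
    (hf : ∀ y, |f y| ≤ c) : |∑ y, a y * f y| ≤ c * B := by
  have hfc : ∀ y, |f y / c| ≤ 1 := fun y => by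
    rw [abs_div, abs_of_pos hc, div_le_one hc]
    exact hf y
  have := hB (fun y => f y / c) hfc
  simp only [mul_div_assoc', ← Finset.sum_div, abs_div, abs_of_pos hc, div_le_iff₀ hc] at this
  linarith

variable [DecidableEq S]

theorem mulVec_apply_le_add_of_abs_sub_le (hP : P ∈ rowStochastic ℝ S) {u v : S → ℝ} {ε : ℝ}
    (huv : ∀ y, |u y - v y| ≤ ε) (x : S) : (P *ᵥ u) x ≤ (P *ᵥ v) x + ε := by
  have hrow : P x ∈ stdSimplex ℝ S := ⟨fun y => hP.1 x y, sum_row_of_mem_rowStochastic hP x⟩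
  have : P x ⬝ᵥ (u - v) ≤ P x ⬝ᵥ fun _ => ε :=
    dotProduct_le_dotProduct_of_nonneg_left (fun y => (le_abs_self _).trans (huv y)) hrow.1
  rw [dotProduct_sub, dotProduct_const_of_mem_stdSimplex hrow] at this
  change P x ⬝ᵥ u ≤ P x ⬝ᵥ v + ε
  linarith

theorem vecMul_mem_stdSimplex (hμ : μ ∈ stdSimplex ℝ S) (hP : P ∈ rowStochastic ℝ S) :
    μ ᵥ* P ∈ stdSimplex ℝ S := by
  refine ⟨nonneg_vecMul_of_mem_rowStochastic hP hμ.1, ?_⟩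
  rw [← dotProduct_one,
    vecMul_dotProduct_one_eq_one_rowStochastic hP (by rw [dotProduct_one, hμ.2])]

theorem vecMul_pow_mem_stdSimplex (hμ : μ ∈ stdSimplex ℝ S) (hP : P ∈ rowStochastic ℝ S)
    (t : ℕ) : μ ᵥ* (P ^ t) ∈ stdSimplex ℝ S :=
  vecMul_mem_stdSimplex hμ (pow_mem hP t)

theorem summable_discounted (hγ0 : 0 ≤ γ) (hγ1 : γ < 1) (hμ : μ ∈ stdSimplex ℝ S)
    (hP : P ∈ rowStochastic ℝ S) (g : S → ℝ) :
    Summable fun t : ℕ => γ ^ t * (μ ᵥ* (P ^ t) ⬝ᵥ g) := by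
  refine ((summable_geometric_of_lt_one hγ0 hγ1).mul_right ‖g‖).of_norm_bounded fun t => ?_
  rw [Real.norm_eq_abs, abs_mul, abs_of_nonneg (pow_nonneg hγ0 t)]
  exact mul_le_mul_of_nonneg_left
    (abs_dotProduct_le_norm_of_mem_stdSimplex (vecMul_pow_mem_stdSimplex hμ hP t) g)
    (pow_nonneg hγ0 t)

theorem hasSum_discounted_sub_bellman (hγ0 : 0 ≤ γ) (hγ1 : γ < 1) (hμ : μ ∈ stdSimplex ℝ S)
    (hP : P ∈ rowStochastic ℝ S) (h : S → ℝ) :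
    HasSum (fun t : ℕ => γ ^ t * (μ ᵥ* (P ^ t) ⬝ᵥ (h - γ • P *ᵥ h))) (μ ⬝ᵥ h) := by
  have hb := (summable_discounted hγ0 hγ1 hμ hP h).hasSum
  have hterm : ∀ t : ℕ, γ ^ t * (μ ᵥ* (P ^ t) ⬝ᵥ (h - γ • P *ᵥ h)) =
      γ ^ t * (μ ᵥ* (P ^ t) ⬝ᵥ h) - γ ^ (t + 1) * (μ ᵥ* (P ^ (t + 1)) ⬝ᵥ h) := fun t => by
    rw [pow_succ P, ← vecMul_vecMul, ← dotProduct_mulVec _ P, dotProduct_sub, dotProduct_smul,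
      smul_eq_mul]
    ring
  rw [funext hterm]
  simpa using hb.sub ((hasSum_nat_add_iff' 1).2 hb)

theorem tsum_discounted_le_of_le_sub_bellman (hγ0 : 0 ≤ γ) (hγ1 : γ < 1)
    (hμ : μ ∈ stdSimplex ℝ S) (hP : P ∈ rowStochastic ℝ S) {g h : S → ℝ} {δ : ℝ}
    (hg : ∀ x, g x ≤ (h - γ • P *ᵥ h) x + δ) :
    ∑' t : ℕ, γ ^ t * (μ ᵥ* (P ^ t) ⬝ᵥ g) ≤ μ ⬝ᵥ h + δ / (1 - γ) := by
  have hupper : HasSum (fun t : ℕ => γ ^ t * (μ ᵥ* (P ^ t) ⬝ᵥ (h - γ • P *ᵥ h)) + γ ^ t * δ)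
      (μ ⬝ᵥ h + δ / (1 - γ)) := by
    refine (hasSum_discounted_sub_bellman hγ0 hγ1 hμ hP h).add ?_
    simpa [div_eq_inv_mul, mul_comm] using (hasSum_geometric_of_lt_one hγ0 hγ1).mul_left δ
  refine hasSum_le (fun t => ?_) (summable_discounted hγ0 hγ1 hμ hP g).hasSum hupper
  have hν := vecMul_pow_mem_stdSimplex hμ hP t
  rw [← mul_add, ← dotProduct_const_of_mem_stdSimplex hν δ, ← dotProduct_add]
  exact mul_le_mul_of_nonneg_left (dotProduct_le_dotProduct_of_nonneg_left hg hν.1)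
    (pow_nonneg hγ0 t)

theorem le_sub_bellman_of_model_error {T That : Matrix S S ℝ} (hThat : That ∈ rowStochastic ℝ S)
    {γ c C ε_approx ε_density : ℝ} (hγ : 0 ≤ γ) (hc : 0 < c) (hC : 0 ≤ C) {r V u uhat : S → ℝ}
    (hV : ∀ x, V x = r x + γ * (T *ᵥ V) x) (hVbd : ∀ x, |V x| ≤ c)
    (hu : ∀ x, |u x - uhat x| ≤ ε_density)
    (hmodel : ∀ x, ∀ f : S → ℝ, (∀ y, |f y| ≤ 1) →
      |∑ y, (That x y - T x y) * f y| ≤ C * (That *ᵥ u) x + ε_approx) (x : S) :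
    r x - γ * c * C * (That *ᵥ uhat) x ≤
      (V - γ • That *ᵥ V) x + (γ * c * ε_approx + γ * c * C * ε_density) := by
  have hmodelV : (That *ᵥ V) x - (T *ᵥ V) x ≤ c * (C * (That *ᵥ u) x + ε_approx) := by
    refine (le_abs_self _).trans ?_
    simpa only [mulVec, dotProduct, ← Finset.sum_sub_distrib, ← sub_mul]
      using abs_sum_mul_le_mul_of_forall_abs_le_one (hmodel x) hc hVbd
  have hdensity := mulVec_apply_le_add_of_abs_sub_le hThat hu x
  have hmodel_scaled := mul_le_mul_of_nonneg_left hmodelV hγ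
  have hdensity_scaled := mul_le_mul_of_nonneg_left hdensity (by positivity : 0 ≤ γ * c * C)
  simp only [Pi.sub_apply, Pi.smul_apply, smul_eq_mul]
  linarith [hV x]

end DiscountedOccupancy

theorem conservative_value_bound_general {S : Type*} [Fintype S] [DecidableEq S]
    (γ : ℝ) (hγ0 : 0 < γ) (hγ1 : γ < 1)
    (r_max : ℝ) (hr_max : 0 < r_max)
    (c : ℝ) (hc : c = r_max / (1 - γ))
    (T That : Matrix S S ℝ)
    (hT0 : ∀ x y, 0 ≤ T x y) (hT1 : ∀ x, ∑ y, T x y = 1)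
    (hThat0 : ∀ x y, 0 ≤ That x y) (hThat1 : ∀ x, ∑ y, That x y = 1)
    (r : S → ℝ)
    (μ₀ : S → ℝ) (hμ0 : ∀ x, 0 ≤ μ₀ x) (hμ1 : ∑ x, μ₀ x = 1)
    (V : S → ℝ) (hV : ∀ x, V x = r x + γ * ∑ y, T x y * V y)
    (hVbd : ∀ x, |V x| ≤ c)
    (u uhat : S → ℝ) (ε_density : ℝ)
    (hu : ∀ x, |u x - uhat x| ≤ ε_density)
    (C : ℝ) (hC : 0 < C) (ε_approx : ℝ)
    (hmodel : ∀ x, ∀ f : S → ℝ, (∀ y, |f y| ≤ 1) →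
      |∑ y, (That x y - T x y) * f y| ≤ C * (∑ y, That x y * u y) + ε_approx)
    (lam : ℝ) (hlam : lam = γ * c * C)
    (rtil : S → ℝ) (hrtil : ∀ x, rtil x = r x - lam * ∑ y, That x y * uhat y)
    (ηM ηMtil : ℝ)
    (hηM : ηM = (1 - γ) * ∑' t : ℕ, γ ^ t * ∑ x, Matrix.vecMul μ₀ (T ^ t) x * r x)
    (hηMtil : ηMtil =
      (1 - γ) * ∑' t : ℕ, γ ^ t * ∑ x, Matrix.vecMul μ₀ (That ^ t) x * rtil x) :
    ηM ≥ ηMtil - γ * c * ε_approx - lam * ε_density := by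
  have hT : T ∈ rowStochastic ℝ S := mem_rowStochastic_iff_sum.2 ⟨hT0, hT1⟩
  have hThat : That ∈ rowStochastic ℝ S := mem_rowStochastic_iff_sum.2 ⟨hThat0, hThat1⟩
  have hμ : μ₀ ∈ stdSimplex ℝ S := ⟨hμ0, hμ1⟩
  have h1γ : 0 < 1 - γ := sub_pos.2 hγ1
  have hc0 : 0 < c := hc ▸ div_pos hr_max h1γ
  have hr : r = V - γ • T *ᵥ V := funext fun x => eq_sub_of_add_eq (hV x).symm
  have hrtil_le : ∀ x, rtil x ≤ (V - γ • That *ᵥ V) x + (γ * c * ε_approx + lam * ε_density) :=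
    fun x => by
      rw [hrtil x, hlam]
      exact le_sub_bellman_of_model_error hThat hγ0.le hc0 hC.le hV hVbd hu hmodel x
  have hreturn : ∑' t : ℕ, γ ^ t * (μ₀ ᵥ* (T ^ t) ⬝ᵥ r) = μ₀ ⬝ᵥ V := by
    rw [hr]
    exact (hasSum_discounted_sub_bellman hγ0.le hγ1 hμ hT V).tsum_eq
  have hreturn_til := tsum_discounted_le_of_le_sub_bellman hγ0.le hγ1 hμ hThat hrtil_le
  change ηM = (1 - γ) * ∑' t : ℕ, γ ^ t * (μ₀ ᵥ* (T ^ t) ⬝ᵥ r) at hηM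
  change ηMtil = (1 - γ) * ∑' t : ℕ, γ ^ t * (μ₀ ᵥ* (That ^ t) ⬝ᵥ rtil) at hηMtil
  have hηMtil_le : ηMtil ≤ ηM + (γ * c * ε_approx + lam * ε_density) :=
    calc ηMtil ≤ (1 - γ) * (μ₀ ⬝ᵥ V + (γ * c * ε_approx + lam * ε_density) / (1 - γ)) := by
          rw [hηMtil]
          exact mul_le_mul_of_nonneg_left hreturn_til h1γ.le
      _ = ηM + (γ * c * ε_approx + lam * ε_density) := by
          rw [hηM, hreturn, mul_add, mul_div_cancel₀ _ h1γ.ne']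
  linarith

/-- Theorem 1 (Conservative Value Bound with Density Error). -/
theorem conservative_value_bound {S : Type*} [Fintype S] [DecidableEq S] [Nonempty S]
    (γ : ℝ) (hγ0 : 0 < γ) (hγ1 : γ < 1)
    (r_max : ℝ) (hr_max : 0 < r_max)
    (c : ℝ) (hc : c = r_max / (1 - γ))
    (T That : Matrix S S ℝ)
    (hT0 : ∀ x y, 0 ≤ T x y) (hT1 : ∀ x, ∑ y, T x y = 1)
    (hThat0 : ∀ x y, 0 ≤ That x y) (hThat1 : ∀ x, ∑ y, That x y = 1)
    (r : S → ℝ) (hr : ∀ x, |r x| ≤ r_max)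
    (μ₀ : S → ℝ) (hμ0 : ∀ x, 0 ≤ μ₀ x) (hμ1 : ∑ x, μ₀ x = 1)
    (V : S → ℝ) (hV : ∀ x, V x = r x + γ * ∑ y, T x y * V y)
    (hVbd : ∀ x, |V x| ≤ c)
    (u uhat : S → ℝ) (ε_density : ℝ) (hεd : 0 ≤ ε_density)
    (hu : ∀ x, |u x - uhat x| ≤ ε_density)
    (C : ℝ) (hC : 0 < C) (ε_approx : ℝ) (hεa : 0 ≤ ε_approx)
    (hmodel : ∀ x, ∀ f : S → ℝ, (∀ y, |f y| ≤ 1) →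
      |∑ y, (That x y - T x y) * f y| ≤ C * (∑ y, That x y * u y) + ε_approx)
    (lam : ℝ) (hlam : lam = γ * c * C)
    (rtil : S → ℝ) (hrtil : ∀ x, rtil x = r x - lam * ∑ y, That x y * uhat y)
    (ηM ηMtil : ℝ)
    (hηM : ηM = (1 - γ) * ∑' t : ℕ, γ ^ t * ∑ x, Matrix.vecMul μ₀ (T ^ t) x * r x)
    (hηMtil : ηMtil =
      (1 - γ) * ∑' t : ℕ, γ ^ t * ∑ x, Matrix.vecMul μ₀ (That ^ t) x * rtil x) :
    ηM ≥ ηMtil - γ * c * ε_approx - lam * ε_density :=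
  conservative_value_bound_general γ hγ0 hγ1 r_max hr_max c hc T That hT0 hT1 hThat0 hThat1 r μ₀ hμ0
    hμ1 V hV hVbd u uhat ε_density hu C hC ε_approx hmodel lam hlam rtil hrtil ηM ηMtil hηM hηMtil
end

section
/- Let S (states) and A (actions) be finite nonempty types, let γ be a real number with 0 < γ < 1, let r_max > 0, set c = r_max/(1−γ), and let μ₀ be a probability vector on S. Let T, T̂ : S → A → S → ℝ be transition kernels and let r : S → A → ℝ satisfy |r s a| ≤ r_max for all s, a. For a policy π and dynamics K ∈ {T, T̂}, let P_{K,π} be the induced state-transition matrix and ρ^π_K the normalized state–action occupancy, and let η_M(π) = ∑_{s,a} ρ^π_T(s,a) · r s a be the normalized true return. Let u, û : S → A → ℝ and ε_density ≥ 0 satisfy |u s' a − û s' a| ≤ ε_density for all s', a, and set U(s,a) = ∑_{s'} T̂ s a s' · u s' a and Û(s,a) = ∑_{s'} T̂ s a s' · û s' a. Assume there exist C > 0 and ε_approx ≥ 0 such that for all (s,a) and all f : S → ℝ with |f s'| ≤ 1 for all s', one has |∑_{s'} (T̂ s a s' − T s a s') · f s'| ≤ C · U(s,a) + ε_approx. Set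 λ = γ·c·C. Suppose π̂ is a policy maximizing the regularized model return, i.e., for every policy π, ∑_{s,a} ρ^{π̂}_{T̂}(s,a) · (r s a − λ·Û(s,a)) ≥ ∑_{s,a} ρ^π_{T̂}(s,a) · (r s a − λ·Û(s,a)). Then for every δ ≥ 0 and every policy π with ∑_{s,a} ρ^π_{T̂}(s,a) · U(s,a) ≤ δ + ε_density, it holds that η_M(π̂) ≥ η_M(π) − 2λ·(δ + 2·ε_density) − 2·γ·c·ε_approx. -/
/-- A transition kernel on finite state and action spaces. -/
def IsKernel {S A : Type*} [Fintype S] (K : S → A → S → ℝ) : Prop :=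
  (∀ s a s', 0 ≤ K s a s') ∧ ∀ s a, ∑ s', K s a s' = 1

/-- A (stationary, stochastic) policy. -/
def IsPolicy {S A : Type*} [Fintype A] (π : S → A → ℝ) : Prop :=
  (∀ s a, 0 ≤ π s a) ∧ ∀ s, ∑ a, π s a = 1

/-- The state-transition matrix induced by dynamics `K` and policy `π`. -/
noncomputable def stateMatrix {S A : Type*} [Fintype A]
    (K : S → A → S → ℝ) (π : S → A → ℝ) : Matrix S S ℝ :=
  fun s s' => ∑ a, π s a * K s a s'

/-- The normalized discounted state–action occupancy of `μ₀` under dynamics `K`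
and policy `π`. -/
noncomputable def occupancy {S A : Type*} [Fintype S] [Fintype A] [DecidableEq S]
    (γ : ℝ) (μ₀ : S → ℝ) (K : S → A → S → ℝ) (π : S → A → ℝ) (s : S) (a : A) : ℝ :=
  (1 - γ) * ∑' t : ℕ, γ ^ t * Matrix.vecMul μ₀ (stateMatrix K π ^ t) s * π s a

/-!
Simulation lemma: `η_T(π) - η_T̂(π)` is `γ` times the `ρ^π_T̂`-expectation of
`∑ s', (T - T̂) s a s' * V s'`, where `V` is the value function of `π` under `T`. Since
`|V| ≤ c`, the model-error hypothesis bounds this by `λ · E_{ρ^π_T̂}[U] + γ c ε_approx`. Apply it to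
`π̂` and to `π`, trade `U` for `Û` at cost `ε_density` on each side, and compare the two
regularized objectives by the optimality of `π̂`.

With `N = ∑ γ^t P^t = (1 - γP)⁻¹`, `ρ(s, a) = (1 - γ) (μ₀ᵀ N)(s) π(s, a)` and `V = N R`, so
the simulation lemma is the resolvent identity `N_P - N_Q = γ N_Q (P - Q) N_P`.
-/

open Matrix Finset

section WeightedSums

variable {ι : Type*} [Fintype ι] {w f g : ι → ℝ}

theorem abs_sum_mul_le (hw : ∀ i, 0 ≤ w i) (hfg : ∀ i, |f i| ≤ g i) :
    |∑ i, w i * f i| ≤ ∑ i, w i * g i := by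
  refine (abs_sum_le_sum_abs _ _).trans (sum_le_sum fun i _ => ?_)
  rw [abs_mul, abs_of_nonneg (hw i)]
  exact mul_le_mul_of_nonneg_left (hfg i) (hw i)

theorem abs_sum_mul_le_of_sum_eq_one (hw : ∀ i, 0 ≤ w i) (hw1 : ∑ i, w i = 1) {ε : ℝ}
    (hf : ∀ i, |f i| ≤ ε) : |∑ i, w i * f i| ≤ ε := by
  simpa [← sum_mul, hw1] using abs_sum_mul_le hw hf

theorem abs_sum_mul_le_mul_of_forall_abs_le_one_s1 {b c : ℝ} (hc : 0 < c)
    (hb : ∀ f : ι → ℝ, (∀ i, |f i| ≤ 1) → |∑ i, w i * f i| ≤ b) (hg : ∀ i, |g i| ≤ c) :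
    |∑ i, w i * g i| ≤ c * b := by
  have h := hb (fun i => g i / c) fun i => by
    rw [abs_div, abs_of_pos hc]; exact div_le_one_of_le₀ (hg i) hc.le
  simp only [← mul_div_assoc, ← sum_div, abs_div, abs_of_pos hc, div_le_iff₀ hc] at h
  rwa [mul_comm]

end WeightedSums

section

variable {S : Type*} [Fintype S] [DecidableEq S]

/-- `∑ γ^t P^t = (1 - γP)⁻¹`: `μ ᵥ* N` is the discounted state visitation of the initial
distribution `μ`, and `N *ᵥ R` the value function of the reward `R`. -/
noncomputable def discountedResolvent (γ : ℝ) (P : Matrix S S ℝ) : Matrix S S ℝ :=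
  ∑' t : ℕ, γ ^ t • P ^ t

namespace discountedResolvent

variable {γ : ℝ} {P Q : Matrix S S ℝ}

theorem hasSum (hγ0 : 0 ≤ γ) (hγ1 : γ < 1) (hP : P ∈ rowStochastic ℝ S) :
    HasSum (fun t : ℕ => γ ^ t • P ^ t) (discountedResolvent γ P) := by
  refine Summable.hasSum <| Pi.summable.2 fun i => Pi.summable.2 fun j => ?_
  have hPt := pow_mem hP
  refine Summable.of_nonneg_of_le (fun t => ?_) (fun t => ?_)
    (summable_geometric_of_lt_one hγ0 hγ1)
  · exact mul_nonneg (pow_nonneg hγ0 t) (nonneg_of_mem_rowStochastic (hPt t))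
  · exact mul_le_of_le_one_right (pow_nonneg hγ0 t) (le_one_of_mem_rowStochastic (hPt t))

theorem hasSum_apply (hγ0 : 0 ≤ γ) (hγ1 : γ < 1) (hP : P ∈ rowStochastic ℝ S) (i j : S) :
    HasSum (fun t : ℕ => γ ^ t * (P ^ t) i j) (discountedResolvent γ P i j) :=
  Pi.hasSum.1 (Pi.hasSum.1 (hasSum hγ0 hγ1 hP) i) j

theorem nonneg (hγ0 : 0 ≤ γ) (hγ1 : γ < 1) (hP : P ∈ rowStochastic ℝ S) (i j : S) :
    0 ≤ discountedResolvent γ P i j :=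
  (hasSum_apply hγ0 hγ1 hP i j).nonneg fun t =>
    mul_nonneg (pow_nonneg hγ0 t) (nonneg_of_mem_rowStochastic (pow_mem hP t))

theorem eq_one_add_smul_mul (hγ0 : 0 ≤ γ) (hγ1 : γ < 1) (hP : P ∈ rowStochastic ℝ S) :
    discountedResolvent γ P = 1 + γ • P * discountedResolvent γ P := by
  have h := (hasSum hγ0 hγ1 hP).summable
  conv_lhs => rw [discountedResolvent, h.tsum_eq_zero_add]
  rw [discountedResolvent, ← h.tsum_mul_left]
  simp only [pow_zero, one_smul, pow_succ', smul_mul_smul]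

theorem eq_one_add_mul_smul (hγ0 : 0 ≤ γ) (hγ1 : γ < 1) (hP : P ∈ rowStochastic ℝ S) :
    discountedResolvent γ P = 1 + discountedResolvent γ P * γ • P := by
  have h := (hasSum hγ0 hγ1 hP).summable
  conv_lhs => rw [discountedResolvent, h.tsum_eq_zero_add]
  rw [discountedResolvent, ← h.tsum_mul_right]
  simp only [pow_zero, one_smul, pow_succ, smul_mul_smul]

theorem mul_one_sub_smul (hγ0 : 0 ≤ γ) (hγ1 : γ < 1) (hP : P ∈ rowStochastic ℝ S) :
    discountedResolvent γ P * (1 - γ • P) = 1 := by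
  nth_rw 1 [mul_sub, mul_one, eq_one_add_mul_smul hγ0 hγ1 hP, add_sub_cancel_right]

theorem one_sub_smul_mul (hγ0 : 0 ≤ γ) (hγ1 : γ < 1) (hP : P ∈ rowStochastic ℝ S) :
    (1 - γ • P) * discountedResolvent γ P = 1 := by
  nth_rw 1 [sub_mul, one_mul, eq_one_add_smul_mul hγ0 hγ1 hP, add_sub_cancel_right]

theorem mulVec_one (hγ0 : 0 ≤ γ) (hγ1 : γ < 1) (hP : P ∈ rowStochastic ℝ S) :
    discountedResolvent γ P *ᵥ 1 = (1 - γ)⁻¹ • 1 := by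
  have h := congrArg (· *ᵥ (1 : S → ℝ)) (eq_one_add_mul_smul hγ0 hγ1 hP)
  simp only [add_mulVec, one_mulVec, ← mulVec_mulVec, smul_mulVec,
    one_vecMul_of_mem_rowStochastic hP, mulVec_smul] at h
  rw [eq_inv_smul_iff₀ (sub_ne_zero.2 hγ1.ne'), sub_smul, one_smul, sub_eq_iff_eq_add]
  exact h

theorem sub_discountedResolvent (hγ0 : 0 ≤ γ) (hγ1 : γ < 1) (hP : P ∈ rowStochastic ℝ S)
    (hQ : Q ∈ rowStochastic ℝ S) :
    discountedResolvent γ P - discountedResolvent γ Q =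
      γ • discountedResolvent γ Q * (P - Q) * discountedResolvent γ P := by
  calc discountedResolvent γ P - discountedResolvent γ Q
      = discountedResolvent γ Q * (1 - γ • Q) * discountedResolvent γ P -
          discountedResolvent γ Q * ((1 - γ • P) * discountedResolvent γ P) := by
        rw [mul_one_sub_smul hγ0 hγ1 hQ, one_mul, one_sub_smul_mul hγ0 hγ1 hP, mul_one]
    _ = γ • discountedResolvent γ Q * (P - Q) * discountedResolvent γ P := by
        simp only [mul_sub, sub_mul, mul_one, one_mul, smul_mul_assoc, mul_smul_comm,
          mul_assoc]
        abel

theorem abs_mulVec_apply_le (hγ0 : 0 ≤ γ) (hγ1 : γ < 1) (hP : P ∈ rowStochastic ℝ S)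
    {R : S → ℝ} {M : ℝ} (hR : ∀ j, |R j| ≤ M) (i : S) :
    |(discountedResolvent γ P *ᵥ R) i| ≤ M / (1 - γ) := by
  calc |(discountedResolvent γ P *ᵥ R) i| ≤ ∑ j, discountedResolvent γ P i j * M :=
        abs_sum_mul_le (nonneg hγ0 hγ1 hP i) hR
    _ = M / (1 - γ) := by
        have h := congrFun (mulVec_one hγ0 hγ1 hP) i
        simp only [mulVec, dotProduct, Pi.one_apply, mul_one, Pi.smul_apply, smul_eq_mul] at h
        rw [← sum_mul, h, div_eq_inv_mul]

theorem hasSum_vecMul_apply (hγ0 : 0 ≤ γ) (hγ1 : γ < 1) (hP : P ∈ rowStochastic ℝ S)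
    (μ : S → ℝ) (j : S) :
    HasSum (fun t : ℕ => γ ^ t * (μ ᵥ* P ^ t) j) ((μ ᵥ* discountedResolvent γ P) j) := by
  have h := hasSum_sum (s := univ) fun i _ => (hasSum_apply hγ0 hγ1 hP i j).mul_left (μ i)
  simp only [mul_left_comm (μ _), ← mul_sum] at h
  exact h

theorem vecMul_apply_nonneg (hγ0 : 0 ≤ γ) (hγ1 : γ < 1) (hP : P ∈ rowStochastic ℝ S)
    {μ : S → ℝ} (hμ : ∀ i, 0 ≤ μ i) (j : S) : 0 ≤ (μ ᵥ* discountedResolvent γ P) j :=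
  (hasSum_vecMul_apply hγ0 hγ1 hP μ j).nonneg fun t =>
    mul_nonneg (pow_nonneg hγ0 t) (nonneg_vecMul_of_mem_rowStochastic (pow_mem hP t) hμ j)

end discountedResolvent

section MDP

variable {A : Type*} [Fintype A] {K Khat : S → A → S → ℝ} {π : S → A → ℝ}

theorem stateMatrix_mem_rowStochastic (hK : IsKernel K) (hπ : IsPolicy π) :
    stateMatrix K π ∈ rowStochastic ℝ S := by
  refine mem_rowStochastic_iff_sum.2 ⟨fun s s' => ?_, fun s => ?_⟩
  · exact sum_nonneg fun a _ => mul_nonneg (hπ.1 s a) (hK.1 s a s')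
  · simp only [stateMatrix]
    rw [sum_comm]
    simp only [← mul_sum, hK.2, mul_one, hπ.2 s]

def actionMean (π g : S → A → ℝ) (s : S) : ℝ := ∑ a, π s a * g s a

/-- For a reward `g` this is the normalized return `η`. -/
noncomputable def occupancyMean (γ : ℝ) (μ₀ : S → ℝ) (K : S → A → S → ℝ) (π g : S → A → ℝ) : ℝ :=
  ∑ s, ∑ a, occupancy γ μ₀ K π s a * g s a

variable {γ : ℝ} {μ₀ : S → ℝ}

theorem occupancy_eq (hγ0 : 0 ≤ γ) (hγ1 : γ < 1) (hK : IsKernel K) (hπ : IsPolicy π)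
    (s : S) (a : A) :
    occupancy γ μ₀ K π s a =
      (1 - γ) * ((μ₀ ᵥ* discountedResolvent γ (stateMatrix K π)) s * π s a) := by
  rw [occupancy, tsum_mul_right, (discountedResolvent.hasSum_vecMul_apply hγ0 hγ1
    (stateMatrix_mem_rowStochastic hK hπ) μ₀ s).tsum_eq]

theorem occupancy_nonneg (hγ0 : 0 ≤ γ) (hγ1 : γ < 1) (hμ₀ : ∀ s, 0 ≤ μ₀ s) (hK : IsKernel K)
    (hπ : IsPolicy π) (s : S) (a : A) : 0 ≤ occupancy γ μ₀ K π s a := by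
  rw [occupancy_eq hγ0 hγ1 hK hπ]
  exact mul_nonneg (sub_nonneg.2 hγ1.le) (mul_nonneg (discountedResolvent.vecMul_apply_nonneg
    hγ0 hγ1 (stateMatrix_mem_rowStochastic hK hπ) hμ₀ s) (hπ.1 s a))

theorem occupancyMean_eq_dotProduct (hγ0 : 0 ≤ γ) (hγ1 : γ < 1) (hK : IsKernel K)
    (hπ : IsPolicy π) (g : S → A → ℝ) :
    occupancyMean γ μ₀ K π g =
      (1 - γ) * ((μ₀ ᵥ* discountedResolvent γ (stateMatrix K π)) ⬝ᵥ actionMean π g) := by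
  simp only [occupancyMean, occupancy_eq hγ0 hγ1 hK hπ, dotProduct, actionMean, mul_sum]
  exact sum_congr rfl fun s _ => sum_congr rfl fun a _ => by ring

theorem occupancyMean_one (hγ0 : 0 ≤ γ) (hγ1 : γ < 1) (hμ₀ : ∑ s, μ₀ s = 1) (hK : IsKernel K)
    (hπ : IsPolicy π) : occupancyMean γ μ₀ K π (fun _ _ => 1) = 1 := by
  have hmean : actionMean π (fun _ _ => 1) = 1 := funext fun s => by simp [actionMean, hπ.2 s]
  rw [occupancyMean_eq_dotProduct hγ0 hγ1 hK hπ, hmean, ← dotProduct_mulVec,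
    discountedResolvent.mulVec_one hγ0 hγ1 (stateMatrix_mem_rowStochastic hK hπ),
    dotProduct_smul, dotProduct_one, hμ₀, smul_eq_mul, mul_one,
    mul_inv_cancel₀ (sub_ne_zero.2 hγ1.ne')]

theorem occupancyMean_sub_const_mul (g h : S → A → ℝ) (b : ℝ) :
    occupancyMean γ μ₀ K π (fun s a => g s a - b * h s a) =
      occupancyMean γ μ₀ K π g - b * occupancyMean γ μ₀ K π h := by
  simp only [occupancyMean, mul_sub, sum_sub_distrib, mul_sum, mul_left_comm b]

theorem occupancyMean_const_mul_add (hγ0 : 0 ≤ γ) (hγ1 : γ < 1) (hμ₀ : ∑ s, μ₀ s = 1)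
    (hK : IsKernel K) (hπ : IsPolicy π) (g : S → A → ℝ) (b ε : ℝ) :
    occupancyMean γ μ₀ K π (fun s a => b * g s a + ε) = b * occupancyMean γ μ₀ K π g + ε := by
  have h := occupancyMean_one hγ0 hγ1 hμ₀ hK hπ
  simp only [occupancyMean, mul_one] at h
  simp only [occupancyMean, mul_add, sum_add_distrib, ← sum_mul, h, one_mul, mul_sum,
    mul_left_comm b]

theorem abs_occupancyMean_sub_le (hγ0 : 0 ≤ γ) (hγ1 : γ < 1) (hμ₀ : ∀ s, 0 ≤ μ₀ s)
    (hμ₁ : ∑ s, μ₀ s = 1) (hK : IsKernel K) (hπ : IsPolicy π) {g h : S → A → ℝ} {ε : ℝ}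
    (hgh : ∀ s a, |g s a - h s a| ≤ ε) :
    |occupancyMean γ μ₀ K π g - occupancyMean γ μ₀ K π h| ≤ ε := by
  have h1 := occupancyMean_one hγ0 hγ1 hμ₁ hK hπ
  simp only [occupancyMean, ← sum_sub_distrib, ← mul_sub, mul_one] at h1 ⊢
  simp only [← Fintype.sum_prod_type'] at h1 ⊢
  exact abs_sum_mul_le_of_sum_eq_one (w := fun x : S × A => occupancy γ μ₀ K π x.1 x.2)
    (f := fun x => g x.1 x.2 - h x.1 x.2)
    (fun x => occupancy_nonneg hγ0 hγ1 hμ₀ hK hπ x.1 x.2) h1 fun x => hgh x.1 x.2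

/-- The simulation lemma. -/
theorem occupancyMean_sub_occupancyMean (hγ0 : 0 ≤ γ) (hγ1 : γ < 1) (hK : IsKernel K)
    (hKhat : IsKernel Khat) (hπ : IsPolicy π) (g : S → A → ℝ) :
    occupancyMean γ μ₀ K π g - occupancyMean γ μ₀ Khat π g =
      γ * occupancyMean γ μ₀ Khat π (fun s a => ∑ s', (K s a s' - Khat s a s') *
        (discountedResolvent γ (stateMatrix K π) *ᵥ actionMean π g) s') := by
  set V := discountedResolvent γ (stateMatrix K π) *ᵥ actionMean π g
  have hmean : actionMean π (fun s a => ∑ s', (K s a s' - Khat s a s') * V s') =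
      (stateMatrix K π - stateMatrix Khat π) *ᵥ V := by
    ext s
    simp only [actionMean, mulVec, dotProduct, Matrix.sub_apply, stateMatrix, ← sum_sub_distrib,
      sum_mul, mul_sum]
    rw [sum_comm]
    exact sum_congr rfl fun s' _ => sum_congr rfl fun a _ => by ring
  rw [occupancyMean_eq_dotProduct hγ0 hγ1 hK hπ, occupancyMean_eq_dotProduct hγ0 hγ1 hKhat hπ,
    occupancyMean_eq_dotProduct hγ0 hγ1 hKhat hπ, hmean, ← mul_sub, ← sub_dotProduct,
    ← vecMul_sub, discountedResolvent.sub_discountedResolvent hγ0 hγ1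
      (stateMatrix_mem_rowStochastic hK hπ) (stateMatrix_mem_rowStochastic hKhat hπ)]
  simp only [V, ← vecMul_vecMul, dotProduct_mulVec, vecMul_smul, smul_vecMul, smul_dotProduct,
    smul_eq_mul]
  ring

theorem abs_occupancyMean_sub_occupancyMean_le (hγ0 : 0 ≤ γ) (hγ1 : γ < 1)
    (hμ₀ : ∀ s, 0 ≤ μ₀ s) (hK : IsKernel K) (hKhat : IsKernel Khat) (hπ : IsPolicy π)
    {g : S → A → ℝ} {M : ℝ} (hM : 0 < M) (hg : ∀ s a, |g s a| ≤ M) {B : S → A → ℝ}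
    (hB : ∀ s a, ∀ f : S → ℝ, (∀ s', |f s'| ≤ 1) →
      |∑ s', (Khat s a s' - K s a s') * f s'| ≤ B s a) :
    |occupancyMean γ μ₀ K π g - occupancyMean γ μ₀ Khat π g| ≤
      γ * (M / (1 - γ) * occupancyMean γ μ₀ Khat π B) := by
  have hV := discountedResolvent.abs_mulVec_apply_le hγ0 hγ1
    (stateMatrix_mem_rowStochastic hK hπ)
    fun s => abs_sum_mul_le_of_sum_eq_one (hπ.1 s) (hπ.2 s) (hg s)
  have hΔ : ∀ s a, |∑ s', (K s a s' - Khat s a s') *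
      (discountedResolvent γ (stateMatrix K π) *ᵥ actionMean π g) s'| ≤ M / (1 - γ) * B s a := by
    intro s a
    rw [← abs_neg, ← sum_neg_distrib]
    simp only [← neg_mul, neg_sub]
    exact abs_sum_mul_le_mul_of_forall_abs_le_one_s1 (div_pos hM (sub_pos.2 hγ1)) (hB s a) hV
  rw [occupancyMean_sub_occupancyMean hγ0 hγ1 hK hKhat hπ, abs_mul, abs_of_nonneg hγ0]
  refine mul_le_mul_of_nonneg_left ?_ hγ0
  calc |occupancyMean γ μ₀ Khat π _|
      ≤ occupancyMean γ μ₀ Khat π (fun s a => M / (1 - γ) * B s a) := by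
        simp only [occupancyMean, ← Fintype.sum_prod_type']
        exact abs_sum_mul_le (w := fun x : S × A => occupancy γ μ₀ Khat π x.1 x.2)
          (f := fun x => ∑ s', (K x.1 x.2 s' - Khat x.1 x.2 s') *
            (discountedResolvent γ (stateMatrix K π) *ᵥ actionMean π g) s')
          (fun x => occupancy_nonneg hγ0 hγ1 hμ₀ hKhat hπ x.1 x.2) fun x => hΔ x.1 x.2
    _ = M / (1 - γ) * occupancyMean γ μ₀ Khat π B := by
        simp only [occupancyMean, mul_sum, mul_left_comm (M / (1 - γ))]

end MDP

end

theorem optimality_gap_general {S A : Type*} [Fintype S] [Fintype A]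
    [DecidableEq S]
    (γ : ℝ) (hγ0 : 0 < γ) (hγ1 : γ < 1)
    (r_max : ℝ) (hr_max : 0 < r_max)
    (c : ℝ) (hc : c = r_max / (1 - γ))
    (μ₀ : S → ℝ) (hμ0 : ∀ x, 0 ≤ μ₀ x) (hμ1 : ∑ x, μ₀ x = 1)
    (T That : S → A → S → ℝ) (hT : IsKernel T) (hThat : IsKernel That)
    (r : S → A → ℝ) (hr : ∀ s a, |r s a| ≤ r_max)
    (u uhat : S → A → ℝ) (ε_density : ℝ)
    (hu : ∀ s' a, |u s' a - uhat s' a| ≤ ε_density)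
    (U Uhat : S → A → ℝ)
    (hU : ∀ s a, U s a = ∑ s', That s a s' * u s' a)
    (hUhat : ∀ s a, Uhat s a = ∑ s', That s a s' * uhat s' a)
    (C : ℝ) (hC : 0 < C) (ε_approx : ℝ)
    (hmodel : ∀ s a, ∀ f : S → ℝ, (∀ s', |f s'| ≤ 1) →
      |∑ s', (That s a s' - T s a s') * f s'| ≤ C * U s a + ε_approx)
    (lam : ℝ) (hlam : lam = γ * c * C)
    (πhat : S → A → ℝ) (hπhat : IsPolicy πhat)
    (hopt : ∀ π : S → A → ℝ, IsPolicy π →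
      (∑ s, ∑ a, occupancy γ μ₀ That πhat s a * (r s a - lam * Uhat s a)) ≥
        ∑ s, ∑ a, occupancy γ μ₀ That π s a * (r s a - lam * Uhat s a)) :
    ∀ δ : ℝ, 0 ≤ δ → ∀ π : S → A → ℝ, IsPolicy π →
      (∑ s, ∑ a, occupancy γ μ₀ That π s a * U s a) ≤ δ + ε_density →
      (∑ s, ∑ a, occupancy γ μ₀ T πhat s a * r s a) ≥
        (∑ s, ∑ a, occupancy γ μ₀ T π s a * r s a) -
          2 * lam * (δ + 2 * ε_density) - 2 * γ * c * ε_approx := by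
  have hlam0 : 0 ≤ lam := by
    rw [hlam, hc]
    exact mul_nonneg (mul_nonneg hγ0.le (div_pos hr_max (sub_pos.2 hγ1)).le) hC.le
  have hsim : ∀ π, IsPolicy π → |occupancyMean γ μ₀ T π r - occupancyMean γ μ₀ That π r| ≤
      lam * occupancyMean γ μ₀ That π U + γ * c * ε_approx := fun π hπ => by
    have h := abs_occupancyMean_sub_occupancyMean_le hγ0.le hγ1 hμ0 hT hThat hπ hr_max hr hmodel
    rw [occupancyMean_const_mul_add hγ0.le hγ1 hμ1 hThat hπ, ← hc] at h
    exact h.trans_eq (by rw [hlam]; ring)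
  have hUUhat : ∀ s a, |U s a - Uhat s a| ≤ ε_density := fun s a => by
    rw [hU, hUhat, ← sum_sub_distrib]
    simpa only [← mul_sub] using
      abs_sum_mul_le_of_sum_eq_one (hThat.1 s a) (hThat.2 s a) fun s' => hu s' a
  have hdens : ∀ π, IsPolicy π →
      |occupancyMean γ μ₀ That π U - occupancyMean γ μ₀ That π Uhat| ≤ ε_density :=
    fun π hπ => abs_occupancyMean_sub_le hγ0.le hγ1 hμ0 hμ1 hThat hπ hUUhat
  intro δ _ π hπ (hJU : occupancyMean γ μ₀ That π U ≤ δ + ε_density)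
  have hopt' : occupancyMean γ μ₀ That π (fun s a => r s a - lam * Uhat s a) ≤
      occupancyMean γ μ₀ That πhat (fun s a => r s a - lam * Uhat s a) := hopt π hπ
  rw [occupancyMean_sub_const_mul, occupancyMean_sub_const_mul] at hopt'
  show occupancyMean γ μ₀ T π r - 2 * lam * (δ + 2 * ε_density) - 2 * γ * c * ε_approx ≤
    occupancyMean γ μ₀ T πhat r
  have hsim₁ := abs_le.1 (hsim πhat hπhat)
  have hsim₂ := abs_le.1 (hsim π hπ)
  have hdens₁ := mul_le_mul_of_nonneg_left (abs_le.1 (hdens πhat hπhat)).2 hlam0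
  have hdens₂ := mul_le_mul_of_nonneg_left (abs_le.1 (hdens π hπ)).1 hlam0
  linarith [mul_le_mul_of_nonneg_left hJU hlam0]

/-- Theorem 2 (Optimality Gap with Density Error). -/
theorem optimality_gap {S A : Type*} [Fintype S] [Fintype A]
    [DecidableEq S] [Nonempty S] [Nonempty A]
    (γ : ℝ) (hγ0 : 0 < γ) (hγ1 : γ < 1)
    (r_max : ℝ) (hr_max : 0 < r_max)
    (c : ℝ) (hc : c = r_max / (1 - γ))
    (μ₀ : S → ℝ) (hμ0 : ∀ x, 0 ≤ μ₀ x) (hμ1 : ∑ x, μ₀ x = 1)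
    (T That : S → A → S → ℝ) (hT : IsKernel T) (hThat : IsKernel That)
    (r : S → A → ℝ) (hr : ∀ s a, |r s a| ≤ r_max)
    (u uhat : S → A → ℝ) (ε_density : ℝ) (hεd : 0 ≤ ε_density)
    (hu : ∀ s' a, |u s' a - uhat s' a| ≤ ε_density)
    (U Uhat : S → A → ℝ)
    (hU : ∀ s a, U s a = ∑ s', That s a s' * u s' a)
    (hUhat : ∀ s a, Uhat s a = ∑ s', That s a s' * uhat s' a)
    (C : ℝ) (hC : 0 < C) (ε_approx : ℝ) (hεa : 0 ≤ ε_approx)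
    (hmodel : ∀ s a, ∀ f : S → ℝ, (∀ s', |f s'| ≤ 1) →
      |∑ s', (That s a s' - T s a s') * f s'| ≤ C * U s a + ε_approx)
    (lam : ℝ) (hlam : lam = γ * c * C)
    (πhat : S → A → ℝ) (hπhat : IsPolicy πhat)
    (hopt : ∀ π : S → A → ℝ, IsPolicy π →
      (∑ s, ∑ a, occupancy γ μ₀ That πhat s a * (r s a - lam * Uhat s a)) ≥
        ∑ s, ∑ a, occupancy γ μ₀ That π s a * (r s a - lam * Uhat s a)) :
    ∀ δ : ℝ, 0 ≤ δ → ∀ π : S → A → ℝ, IsPolicy π →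
      (∑ s, ∑ a, occupancy γ μ₀ That π s a * U s a) ≤ δ + ε_density →
      (∑ s, ∑ a, occupancy γ μ₀ T πhat s a * r s a) ≥
        (∑ s, ∑ a, occupancy γ μ₀ T π s a * r s a) -
          2 * lam * (δ + 2 * ε_density) - 2 * γ * c * ε_approx :=
  optimality_gap_general γ hγ0 hγ1 r_max hr_max c hc μ₀ hμ0 hμ1 T That hT hThat r hr u uhat
    ε_density hu U Uhat hU hUhat C hC ε_approx hmodel lam hlam πhat hπhat hopt
end

section
/- Telescoping lemma for Markov chains with identical rewards and different dynamics: Let S be a finite nonempty type, let γ be a real number with 0 ≤ γ < 1, let P and P̂ be row-stochastic matrices on S, let r : S → ℝ, let V be the value function of (P, r, γ) and V̂ the value function of (P̂, r, γ), and let μ₀ be a probability vector on S. Define the discounted occupancy vector ρ̂ x = ∑'_{t≥0} γ^t · (μ₀ᵀ P̂^t) x, where μ₀ᵀ P̂^t denotes the row vector μ₀ multiplied by the t-th matrix power of P̂, and define G x = ∑_y P̂ x y · V y − ∑_y P x y · V y. Then ∑_x μ₀ x · V̂ x − ∑_x μ₀ x · V x = γ · ∑_x ρ̂ x · G x. -/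
/-- Telescoping lemma for Markov chains with identical rewards and different dynamics. -/
theorem telescoping_lemma {S : Type*} [Fintype S] [DecidableEq S] [Nonempty S]
    (γ : ℝ) (hγ0 : 0 ≤ γ) (hγ1 : γ < 1)
    (P Phat : Matrix S S ℝ)
    (hP0 : ∀ x y, 0 ≤ P x y) (hP1 : ∀ x, ∑ y, P x y = 1)
    (hPhat0 : ∀ x y, 0 ≤ Phat x y) (hPhat1 : ∀ x, ∑ y, Phat x y = 1)
    (r : S → ℝ)
    (V Vhat : S → ℝ)
    (hV : ∀ x, V x = r x + γ * ∑ y, P x y * V y)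
    (hVhat : ∀ x, Vhat x = r x + γ * ∑ y, Phat x y * Vhat y)
    (μ₀ : S → ℝ) (hμ0 : ∀ x, 0 ≤ μ₀ x) (hμ1 : ∑ x, μ₀ x = 1)
    (ρhat : S → ℝ)
    (hρ : ∀ x, ρhat x = ∑' t : ℕ, γ ^ t * Matrix.vecMul μ₀ (Phat ^ t) x)
    (G : S → ℝ)
    (hG : ∀ x, G x = (∑ y, Phat x y * V y) - ∑ y, P x y * V y) :
    (∑ x, μ₀ x * Vhat x) - (∑ x, μ₀ x * V x) = γ * ∑ x, ρhat x * G x := by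
  classical
  set W : S → ℝ := fun x => Vhat x - V x with hWdef
  -- powers of Phat are stochastic
  have hpow : ∀ t : ℕ, (∀ x y, 0 ≤ (Phat ^ t) x y) ∧ (∀ x, ∑ y, (Phat ^ t) x y = 1) := by
    intro t
    induction t with
    | zero =>
      constructor
      · intro x y
        simp [Matrix.one_apply]
        split <;> norm_num
      · intro x
        simp [Matrix.one_apply]
    | succ n ih =>
      constructor
      · intro x y
        rw [pow_succ, Matrix.mul_apply]
        exact Finset.sum_nonneg fun z _ => mul_nonneg (ih.1 x z) (hPhat0 z y)
      · intro x
        rw [pow_succ]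
        simp only [Matrix.mul_apply]
        rw [Finset.sum_comm]
        have : ∀ z, ∑ y, (Phat ^ n) x z * Phat z y = (Phat ^ n) x z := by
          intro z
          rw [← Finset.mul_sum, hPhat1, mul_one]
        simp_rw [this]
        exact ih.2 x
  have hpowle : ∀ (t : ℕ) x y, (Phat ^ t) x y ≤ 1 := by
    intro t x y
    calc (Phat ^ t) x y ≤ ∑ z, (Phat ^ t) x z :=
          Finset.single_le_sum (fun z _ => (hpow t).1 x z) (Finset.mem_univ y)
      _ = 1 := (hpow t).2 x
  have hvm0 : ∀ (t : ℕ) x, 0 ≤ Matrix.vecMul μ₀ (Phat ^ t) x := by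
    intro t x
    simp only [Matrix.vecMul, dotProduct]
    exact Finset.sum_nonneg fun y _ => mul_nonneg (hμ0 y) ((hpow t).1 y x)
  have hvm1 : ∀ (t : ℕ) x, Matrix.vecMul μ₀ (Phat ^ t) x ≤ 1 := by
    intro t x
    simp only [Matrix.vecMul, dotProduct]
    calc ∑ y, μ₀ y * (Phat ^ t) y x ≤ ∑ y, μ₀ y * 1 :=
          Finset.sum_le_sum fun y _ => mul_le_mul_of_nonneg_left (hpowle t y x) (hμ0 y)
      _ = 1 := by simp [hμ1]
  have hsum : ∀ x, Summable (fun t : ℕ => γ ^ t * Matrix.vecMul μ₀ (Phat ^ t) x) := by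
    intro x
    apply Summable.of_nonneg_of_le
        (fun t => mul_nonneg (pow_nonneg hγ0 t) (hvm0 t x))
        (fun t => ?_) (summable_geometric_of_lt_one hγ0 hγ1)
    calc γ ^ t * Matrix.vecMul μ₀ (Phat ^ t) x ≤ γ ^ t * 1 :=
          mul_le_mul_of_nonneg_left (hvm1 t x) (pow_nonneg hγ0 t)
      _ = γ ^ t := mul_one _
  -- key identity: ρhat - γ ρhat Phat = μ₀
  have hkey : ∀ x, ρhat x - γ * Matrix.vecMul ρhat Phat x = μ₀ x := by
    intro x
    have h1 : ∀ t : ℕ, ∑ y, γ ^ t * Matrix.vecMul μ₀ (Phat ^ t) y * Phat y x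
        = γ ^ t * Matrix.vecMul μ₀ (Phat ^ (t + 1)) x := by
      intro t
      rw [pow_succ, ← Matrix.vecMul_vecMul]
      simp only [Matrix.vecMul, dotProduct, Finset.mul_sum]
      refine Finset.sum_congr rfl fun y _ => ?_
      rw [← Finset.mul_sum]; ring
    have h1' : Matrix.vecMul ρhat Phat x
        = ∑' t : ℕ, γ ^ t * Matrix.vecMul μ₀ (Phat ^ (t + 1)) x := by
      simp only [Matrix.vecMul, dotProduct]
      have hterm : ∀ y, ρhat y * Phat y x
          = ∑' t : ℕ, γ ^ t * Matrix.vecMul μ₀ (Phat ^ t) y * Phat y x := by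
        intro y
        rw [hρ y, ← tsum_mul_right]
      simp_rw [hterm]
      rw [← Summable.tsum_finsetSum (fun y _ => ((hsum y).mul_right (Phat y x)))]
      exact tsum_congr h1
    rw [hρ x, h1', ← tsum_mul_left]
    have h3 : (fun t : ℕ => γ * (γ ^ t * Matrix.vecMul μ₀ (Phat ^ (t + 1)) x))
        = fun t : ℕ => γ ^ (t + 1) * Matrix.vecMul μ₀ (Phat ^ (t + 1)) x := by
      funext t; ring
    rw [h3, Summable.tsum_eq_zero_add (hsum x)]
    simp [Matrix.vecMul_one]
  -- recursion for W
  have hWrec : ∀ x, γ * G x = W x - γ * ∑ y, Phat x y * W y := by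
    intro x
    have : ∑ y, Phat x y * W y = (∑ y, Phat x y * Vhat y) - ∑ y, Phat x y * V y := by
      rw [← Finset.sum_sub_distrib]
      congr 1; funext y; simp [hWdef]; ring
    rw [hG x, this]
    have e1 := hV x
    have e2 := hVhat x
    simp only [hWdef]
    nlinarith [e1, e2]
  -- final computation
  have hfinal : γ * ∑ x, ρhat x * G x = ∑ x, μ₀ x * W x := by
    have step : ∀ x, γ * (ρhat x * G x)
        = ρhat x * W x - γ * ∑ y, ρhat x * Phat x y * W y := by
      intro x
      have hT : ρhat x * ∑ y, Phat x y * W y = ∑ y, ρhat x * Phat x y * W y := by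
        rw [Finset.mul_sum]
        exact Finset.sum_congr rfl fun y _ => (mul_assoc _ _ _).symm
      calc γ * (ρhat x * G x) = ρhat x * (γ * G x) := by ring
        _ = ρhat x * (W x - γ * ∑ y, Phat x y * W y) := by rw [hWrec x]
        _ = ρhat x * W x - γ * (ρhat x * ∑ y, Phat x y * W y) := by ring
        _ = _ := by rw [hT]
    rw [Finset.mul_sum]
    simp_rw [step]
    rw [Finset.sum_sub_distrib]
    have swap : ∑ x, γ * ∑ y, ρhat x * Phat x y * W y
        = ∑ y, γ * Matrix.vecMul ρhat Phat y * W y := by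
      simp_rw [Finset.mul_sum]
      rw [Finset.sum_comm]
      refine Finset.sum_congr rfl fun y _ => ?_
      simp only [Matrix.vecMul, dotProduct, Finset.sum_mul, Finset.mul_sum]
      exact Finset.sum_congr rfl fun x _ => by ring
    rw [swap, ← Finset.sum_sub_distrib]
    refine Finset.sum_congr rfl fun y _ => ?_
    calc ρhat y * W y - γ * Matrix.vecMul ρhat Phat y * W y
        = (ρhat y - γ * Matrix.vecMul ρhat Phat y) * W y := by ring
      _ = μ₀ y * W y := by rw [hkey y]
  rw [hfinal]
  rw [← Finset.sum_sub_distrib]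
  congr 1; funext x; simp [hWdef]; ring
end

section
/- Corollary of the telescoping lemma: Let S be a finite nonempty type, let γ be a real number with 0 ≤ γ < 1, let P and P̂ be row-stochastic matrices on S, let r : S → ℝ, let V be the value function of (P, r, γ), and let μ₀ be a probability vector on S. Define the discounted occupancy vector ρ̂ x = ∑'_{t≥0} γ^t · (μ₀ᵀ P̂^t) x and G x = ∑_y P̂ x y · V y − ∑_y P x y · V y. Then ∑_x μ₀ x · V x = ∑_x ρ̂ x · (r x − γ · G x), and consequently ∑_x μ₀ x · V x ≥ ∑_x ρ̂ x · (r x − γ · |G x|). -/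
/-!
Write `μₜ = μ₀ P̂ᵗ` and `w = V - γ P̂ V`, which equals `r - γ G` by the Bellman equation.
Then `γᵗ μₜ ⬝ w = γᵗ μₜ ⬝ V - γᵗ⁺¹ μₜ₊₁ ⬝ V`, so the occupancy-weighted series telescopes to
`μ₀ ⬝ V`: the tail vanishes because a row-stochastic matrix keeps `μₜ` bounded by `‖μ₀‖₁`.
-/

open Filter Topology

theorem hasSum_sub_succ_of_tendsto_zero {f : ℕ → ℝ} (hs : Summable fun n => f n - f (n + 1))
    (hf : Tendsto f atTop (𝓝 0)) : HasSum (fun n => f n - f (n + 1)) (f 0) := by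
  rw [hs.hasSum_iff_tendsto_nat]
  simp only [Finset.sum_range_sub']
  simpa using tendsto_const_nhds.sub hf

namespace Matrix

variable {n : Type*} [Fintype n] [DecidableEq n] {M : Matrix n n ℝ}

theorem abs_vecMul_le_of_mem_rowStochastic (hM : M ∈ rowStochastic ℝ n) (μ : n → ℝ) (x : n) :
    |(μ ᵥ* M) x| ≤ ∑ y, |μ y| :=
  calc |(μ ᵥ* M) x| ≤ ∑ y, |μ y * M y x| := Finset.abs_sum_le_sum_abs _ _
    _ = ∑ y, |μ y| * M y x := by
      simp only [abs_mul, abs_of_nonneg (nonneg_of_mem_rowStochastic hM)]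
    _ ≤ ∑ y, |μ y| := Finset.sum_le_sum fun _ _ =>
      mul_le_of_le_one_right (abs_nonneg _) (le_one_of_mem_rowStochastic hM)

variable {γ : ℝ}

noncomputable def discountedOccupancy (γ : ℝ) (M : Matrix n n ℝ) (μ : n → ℝ) : n → ℝ :=
  fun x => ∑' t : ℕ, γ ^ t * (μ ᵥ* M ^ t) x

theorem summable_geometric_smul_vecMul_pow (hM : M ∈ rowStochastic ℝ n) (hγ0 : 0 ≤ γ)
    (hγ1 : γ < 1) (μ : n → ℝ) : Summable fun t : ℕ => γ ^ t • μ ᵥ* (M ^ t) := by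
  refine Pi.summable.2 fun x => ?_
  refine .of_norm_bounded ((summable_geometric_of_lt_one hγ0 hγ1).mul_left (∑ y, |μ y|))
    fun t => ?_
  rw [Pi.smul_apply, smul_eq_mul, norm_mul, norm_pow, Real.norm_of_nonneg hγ0, mul_comm]
  gcongr
  exact abs_vecMul_le_of_mem_rowStochastic (pow_mem hM t) μ x

theorem geometric_smul_vecMul_pow_dotProduct_sub (μ V : n → ℝ) (t : ℕ) :
    (γ ^ t • μ ᵥ* M ^ t) ⬝ᵥ (V - γ • M *ᵥ V) =
      (γ ^ t • μ ᵥ* M ^ t) ⬝ᵥ V - (γ ^ (t + 1) • μ ᵥ* M ^ (t + 1)) ⬝ᵥ V := by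
  simp only [dotProduct_sub, smul_dotProduct, dotProduct_smul, dotProduct_mulVec, smul_vecMul,
    vecMul_vecMul, pow_succ, smul_eq_mul]
  ring

theorem dotProduct_eq_discountedOccupancy_dotProduct (hM : M ∈ rowStochastic ℝ n) (hγ0 : 0 ≤ γ)
    (hγ1 : γ < 1) (μ V : n → ℝ) :
    μ ⬝ᵥ V = discountedOccupancy γ M μ ⬝ᵥ (V - γ • M *ᵥ V) := by
  have hsummable : Summable fun t : ℕ => γ ^ t • μ ᵥ* (M ^ t) :=
    summable_geometric_smul_vecMul_pow hM hγ0 hγ1 μ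
  have hasSum_dot : HasSum (fun t : ℕ => (γ ^ t • μ ᵥ* M ^ t) ⬝ᵥ (V - γ • M *ᵥ V))
      (discountedOccupancy γ M μ ⬝ᵥ (V - γ • M *ᵥ V)) :=
    hasSum_sum fun x _ => by
      have := (Pi.hasSum.1 hsummable.hasSum x).mul_right ((V - γ • M *ᵥ V) x)
      rwa [tsum_apply hsummable] at this
  have htail : Tendsto (fun t : ℕ => (γ ^ t • μ ᵥ* M ^ t) ⬝ᵥ V) atTop (𝓝 0) := by
    have hcont : Continuous fun v : n → ℝ => v ⬝ᵥ V := continuous_id.dotProduct continuous_const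
    rw [← zero_dotProduct V]
    exact (hcont.tendsto 0).comp hsummable.tendsto_atTop_zero
  simp only [geometric_smul_vecMul_pow_dotProduct_sub] at hasSum_dot
  simpa using (hasSum_sub_succ_of_tendsto_zero hasSum_dot.summable htail).unique hasSum_dot

theorem discountedOccupancy_nonneg (hM : M ∈ rowStochastic ℝ n) (hγ0 : 0 ≤ γ) {μ : n → ℝ}
    (hμ : ∀ x, 0 ≤ μ x) (x : n) : 0 ≤ discountedOccupancy γ M μ x :=
  tsum_nonneg fun t =>
    mul_nonneg (pow_nonneg hγ0 t) (nonneg_vecMul_of_mem_rowStochastic (pow_mem hM t) hμ x)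

end Matrix

open Matrix in
theorem telescoping_corollary_general {S : Type*} [Fintype S] [DecidableEq S]
    (γ : ℝ) (hγ0 : 0 ≤ γ) (hγ1 : γ < 1)
    (P Phat : Matrix S S ℝ)
    (hPhat0 : ∀ x y, 0 ≤ Phat x y) (hPhat1 : ∀ x, ∑ y, Phat x y = 1)
    (r : S → ℝ)
    (V : S → ℝ)
    (hV : ∀ x, V x = r x + γ * ∑ y, P x y * V y)
    (μ₀ : S → ℝ) (hμ0 : ∀ x, 0 ≤ μ₀ x)
    (ρhat : S → ℝ)
    (hρ : ∀ x, ρhat x = ∑' t : ℕ, γ ^ t * Matrix.vecMul μ₀ (Phat ^ t) x)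
    (G : S → ℝ)
    (hG : ∀ x, G x = (∑ y, Phat x y * V y) - ∑ y, P x y * V y) :
    (∑ x, μ₀ x * V x) = (∑ x, ρhat x * (r x - γ * G x)) ∧
      (∑ x, μ₀ x * V x) ≥ ∑ x, ρhat x * (r x - γ * |G x|) := by
  have hM : Phat ∈ rowStochastic ℝ S := mem_rowStochastic_iff_sum.2 ⟨hPhat0, hPhat1⟩
  have hw : V - γ • Phat *ᵥ V = fun x => r x - γ * G x := by
    funext x
    simp only [Pi.sub_apply, Pi.smul_apply, smul_eq_mul, mulVec, dotProduct, hG]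
    linarith [hV x]
  have heq : ∑ x, μ₀ x * V x = ∑ x, ρhat x * (r x - γ * G x) := by
    have := dotProduct_eq_discountedOccupancy_dotProduct hM hγ0 hγ1 μ₀ V
    rwa [hw, show discountedOccupancy γ Phat μ₀ = ρhat from (funext hρ).symm] at this
  refine ⟨heq, heq ▸ Finset.sum_le_sum fun x _ => ?_⟩
  gcongr
  · exact funext hρ ▸ discountedOccupancy_nonneg hM hγ0 hμ0 x
  · exact le_abs_self _

/-- Corollary of the telescoping lemma. -/
theorem telescoping_corollary {S : Type*} [Fintype S] [DecidableEq S] [Nonempty S]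
    (γ : ℝ) (hγ0 : 0 ≤ γ) (hγ1 : γ < 1)
    (P Phat : Matrix S S ℝ)
    (hP0 : ∀ x y, 0 ≤ P x y) (hP1 : ∀ x, ∑ y, P x y = 1)
    (hPhat0 : ∀ x y, 0 ≤ Phat x y) (hPhat1 : ∀ x, ∑ y, Phat x y = 1)
    (r : S → ℝ)
    (V : S → ℝ)
    (hV : ∀ x, V x = r x + γ * ∑ y, P x y * V y)
    (μ₀ : S → ℝ) (hμ0 : ∀ x, 0 ≤ μ₀ x) (hμ1 : ∑ x, μ₀ x = 1)
    (ρhat : S → ℝ)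
    (hρ : ∀ x, ρhat x = ∑' t : ℕ, γ ^ t * Matrix.vecMul μ₀ (Phat ^ t) x)
    (G : S → ℝ)
    (hG : ∀ x, G x = (∑ y, Phat x y * V y) - ∑ y, P x y * V y) :
    (∑ x, μ₀ x * V x) = (∑ x, ρhat x * (r x - γ * G x)) ∧
      (∑ x, μ₀ x * V x) ≥ ∑ x, ρhat x * (r x - γ * |G x|) :=
  telescoping_corollary_general γ hγ0 hγ1 P Phat hPhat0 hPhat1 r V hV μ₀ hμ0 ρhat hρ G hG
end
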